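/- arXiv:1503.06954 — 6 statements merged into one kernel-verified Lean document; each statement's English description precedes it below -/
import Mathlib

section
/- For every complex s that is not a nonpositive real integer ≤ -1, the logarithmic derivative of Π(s) := Γ(s+1) is given by the absolutely convergent series Π′(s)/Π(s) = Σ_{n=1}^{∞} [ -1/(s+n) + log(n+1) - log n ]. -/
/-!
Each term is `O(1/n²)` locally uniformly in `s`, so the series is a holomorphic function of `s`
on the connected open set `ℂ ∖ {-1, -2, …}`, as is `Π'(s)/Π(s) = ψ(s + 1)` with `ψ = Γ'/Γ`; by the
identity theorem it suffices to compare the two for real `s > -1`. By the functional equation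
`ψ(w + 1) = ψ(w) + 1/w`, the `N`-th partial sum is `ψ(s + 1) - (ψ(s + 1 + N) - log (N + 1))`, and
log-convexity of `Γ` on `(0, ∞)` traps `ψ(y)` between `log (y - 1)` and `log y`, so the error
term tends to `0`.
-/

open Complex Filter Topology Set

theorem ConvexOn.deriv_mem_Icc_sub {S : Set ℝ} {f : ℝ → ℝ} (hf : ConvexOn ℝ S f)
    {y : ℝ} (hy₀ : y - 1 ∈ S) (hy : y ∈ S) (hy₁ : y + 1 ∈ S) (hd : DifferentiableAt ℝ f y) :
    deriv f y ∈ Icc (f y - f (y - 1)) (f (y + 1) - f y) := by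
  constructor
  · simpa [slope_def_field] using hf.slope_le_deriv hy₀ hy (by linarith) hd
  · simpa [slope_def_field] using hf.deriv_le_slope hy hy₁ (by linarith) hd

namespace Real

theorem abs_log_one_add_sub_self_le {x : ℝ} (hx : 0 ≤ x) : |log (1 + x) - x| ≤ x ^ 2 := by
  have hpos : 0 < 1 + x := by linarith
  have hupper : log (1 + x) ≤ x := by linarith [log_le_sub_one_of_pos hpos]
  have hlower : x - x ^ 2 ≤ log (1 + x) := by
    refine le_trans ?_ (one_sub_inv_le_log_of_pos hpos)
    rw [le_sub_iff_add_le, ← le_sub_iff_add_le', inv_le_iff_one_le_mul₀ hpos]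
    nlinarith [pow_nonneg hx 3]
  rw [abs_le]
  constructor <;> nlinarith

theorem logDeriv_Gamma_mem_Icc {y : ℝ} (hy : 1 < y) :
    logDeriv Gamma y ∈ Icc (log (y - 1)) (log y) := by
  have hrec {x : ℝ} (hx : 0 < x) : (log ∘ Gamma) (x + 1) - (log ∘ Gamma) x = log x := by
    simp only [Function.comp_apply, Gamma_add_one hx.ne', log_mul hx.ne' (Gamma_pos_of_pos hx).ne']
    ring
  have hd : DifferentiableAt ℝ Gamma y := differentiableAt_Gamma fun m => by linarith
  have hbounds := convexOn_log_Gamma.deriv_mem_Icc_sub (y := y)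
    (mem_Ioi.mpr (by linarith)) (mem_Ioi.mpr (by linarith)) (mem_Ioi.mpr (by linarith))
    (hd.log (Gamma_pos_of_pos (by linarith)).ne')
  have hstep := hrec (x := y - 1) (by linarith)
  rw [sub_add_cancel] at hstep
  rwa [deriv_log_comp_eq_logDeriv hd (Gamma_pos_of_pos (by linarith)).ne', hrec (by linarith),
    hstep] at hbounds

theorem tendsto_logDeriv_Gamma_add_sub_log (x : ℝ) :
    Tendsto (fun t => logDeriv Gamma (t + x) - log t) atTop (𝓝 0) := by
  have hbounds : ∀ᶠ t in atTop, logDeriv Gamma (t + x) ∈ Icc (log (t + (x - 1))) (log (t + x)) := by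
    filter_upwards [eventually_gt_atTop (1 - x)] with t ht
    simpa only [add_sub_assoc] using logDeriv_Gamma_mem_Icc (by linarith : 1 < t + x)
  exact tendsto_of_tendsto_of_tendsto_of_le_of_le' (tendsto_log_comp_add_sub_log (x - 1))
    (tendsto_log_comp_add_sub_log x) (hbounds.mono fun t ht => sub_le_sub_right ht.1 _)
    (hbounds.mono fun t ht => sub_le_sub_right ht.2 _)

end Real

namespace Complex

theorem digamma_ofReal {x : ℝ} (hx : ∀ m : ℕ, x ≠ -m) : digamma x = logDeriv Real.Gamma x := by
  have hC : HasDerivAt Gamma (deriv Gamma x) x :=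
    (differentiableAt_Gamma _ fun m => by exact_mod_cast hx m).hasDerivAt
  have hR : HasDerivAt Real.Gamma (deriv Real.Gamma x) x :=
    (Real.differentiableAt_Gamma hx).hasDerivAt
  have hderiv : deriv Gamma x = deriv Real.Gamma x :=
    hC.comp_ofReal.unique (by simpa only [Gamma_ofReal] using hR.ofReal_comp)
  rw [digamma_def, logDeriv_apply, logDeriv_apply, hderiv, Gamma_ofReal, ofReal_div]

theorem digamma_add_nat {w : ℂ} (hw : ∀ m : ℕ, w ≠ -m) (N : ℕ) :
    digamma (w + N) = digamma w + ∑ n ∈ Finset.range N, (w + n)⁻¹ := by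
  induction N with
  | zero => simp
  | succ N ih =>
    have hwN : ∀ m : ℕ, w + N ≠ -m := fun m h => hw (m + N) (by push_cast; linear_combination h)
    rw [Nat.cast_succ, ← add_assoc, digamma_apply_add_one _ hwN, ih, Finset.sum_range_succ,
      add_assoc]

end Complex

noncomputable def digammaTerm (n : ℕ) (s : ℂ) : ℂ :=
  -1 / (s + ((n : ℂ) + 1)) + (Real.log ((n : ℝ) + 2) : ℂ) - (Real.log ((n : ℝ) + 1) : ℂ)

theorem digammaTerm_eq {n : ℕ} {s : ℂ} (hs : s + (n + 1) ≠ 0) :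
    digammaTerm n s = s / ((n + 1) * (s + (n + 1)))
      + ((Real.log (1 + 1 / (n + 1)) - 1 / (n + 1) : ℝ) : ℂ) := by
  have hn : (n : ℝ) + 1 ≠ 0 := by positivity
  have hnC : (n : ℂ) + 1 ≠ 0 := by exact_mod_cast hn
  rw [show (1 : ℝ) + 1 / (n + 1) = (n + 2) / (n + 1) by field_simp; ring,
    Real.log_div (by positivity) hn, digammaTerm]
  push_cast
  field_simp
  ring

theorem norm_digammaTerm_le {R : ℝ} {s : ℂ} (hs : ‖s‖ ≤ R) {n : ℕ} (hn : 2 * R ≤ n) :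
    ‖digammaTerm n s‖ ≤ (2 * R + 1) / ((n : ℝ) + 1) ^ 2 := by
  have hn1 : (0 : ℝ) < n + 1 := by positivity
  have hnorm : ‖(n : ℂ) + 1‖ = n + 1 := by exact_mod_cast Complex.norm_natCast (n + 1)
  have hlower : ((n : ℝ) + 1) / 2 ≤ ‖s + (n + 1)‖ := by
    have htri := norm_add_le (s + ((n : ℂ) + 1)) (-s)
    rw [add_neg_cancel_comm, norm_neg, hnorm] at htri
    linarith
  have hrat : ‖s / ((n + 1) * (s + (n + 1)))‖ ≤ 2 * R / ((n : ℝ) + 1) ^ 2 := by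
    rw [norm_div, norm_mul, hnorm, div_le_div_iff₀ (mul_pos hn1 (by linarith)) (by positivity)]
    nlinarith [mul_le_mul_of_nonneg_right hs (sq_nonneg ((n : ℝ) + 1)),
      mul_le_mul_of_nonneg_left hlower hn1.le, norm_nonneg s]
  have hlog : |Real.log (1 + 1 / (n + 1)) - 1 / (n + 1)| ≤ 1 / ((n : ℝ) + 1) ^ 2 := by
    simpa [div_pow] using Real.abs_log_one_add_sub_self_le (by positivity : (0 : ℝ) ≤ 1 / (n + 1))
  calc ‖digammaTerm n s‖
      ≤ ‖s / ((n + 1) * (s + (n + 1)))‖ + |Real.log (1 + 1 / (n + 1)) - 1 / (n + 1)| := by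
        rw [digammaTerm_eq (norm_pos_iff.mp (by linarith)), ← Real.norm_eq_abs,
          ← Complex.norm_real]
        exact norm_add_le _ _
    _ ≤ (2 * R + 1) / ((n : ℝ) + 1) ^ 2 := by rw [add_div]; exact add_le_add hrat hlog

theorem summable_div_natCast_add_one_sq (c : ℝ) : Summable fun n : ℕ => c / ((n : ℝ) + 1) ^ 2 := by
  have h := (summable_nat_add_iff 1).mpr (Real.summable_one_div_nat_pow.mpr one_lt_two)
  simpa [div_eq_mul_inv] using h.mul_left c

theorem summable_norm_digammaTerm (s : ℂ) : Summable fun n => ‖digammaTerm n s‖ := by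
  refine .of_norm_bounded_eventually_nat (summable_div_natCast_add_one_sq (2 * ‖s‖ + 1)) ?_
  filter_upwards [eventually_ge_atTop ⌈2 * ‖s‖⌉₊] with n hn
  rw [norm_norm]
  exact norm_digammaTerm_le le_rfl ((Nat.le_ceil _).trans (by exact_mod_cast hn))

theorem sum_range_digammaTerm (s : ℂ) (N : ℕ) :
    ∑ n ∈ Finset.range N, digammaTerm n s
      = Real.log ((N : ℝ) + 1) - ∑ n ∈ Finset.range N, (s + 1 + n)⁻¹ := by
  induction N with
  | zero => simp
  | succ N ih =>
    rw [Finset.sum_range_succ, ih, Finset.sum_range_succ, digammaTerm]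
    push_cast
    ring_nf

theorem isClosed_range_neg_natCast_sub_one : IsClosed (range fun m : ℕ => -(m : ℂ) - 1) := by
  refine Metric.isClosed_of_pairwise_le_dist one_pos ?_
  rintro _ ⟨m, rfl⟩ _ ⟨k, rfl⟩ hmk
  have hmk' : (m : ℤ) ≠ k := fun h => hmk (by rw [Int.ofNat_inj.mp h])
  rw [dist_sub_right, dist_neg_neg, dist_eq, ← Int.cast_natCast, ← Int.cast_natCast (R := ℂ) k,
    ← Int.cast_sub, norm_intCast]
  exact_mod_cast Int.one_le_abs (sub_ne_zero.mpr hmk')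

theorem compl_range_neg_natCast_sub_one :
    (range fun m : ℕ => -(m : ℂ) - 1)ᶜ = {s : ℂ | ∀ m : ℕ, s + 1 ≠ -m} := by
  ext s
  simp [eq_sub_iff_add_eq, eq_comm]

theorem isOpen_setOf_add_one_ne_neg_natCast : IsOpen {s : ℂ | ∀ m : ℕ, s + 1 ≠ -m} :=
  compl_range_neg_natCast_sub_one ▸ isClosed_range_neg_natCast_sub_one.isOpen_compl

theorem isPreconnected_setOf_add_one_ne_neg_natCast :
    IsPreconnected {s : ℂ | ∀ m : ℕ, s + 1 ≠ -m} :=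
  compl_range_neg_natCast_sub_one ▸
    ((countable_range _).isConnected_compl_of_one_lt_rank (by simp)).isPreconnected

theorem differentiableOn_tsum_digammaTerm :
    DifferentiableOn ℂ (fun s => ∑' n, digammaTerm n s) {s : ℂ | ∀ m : ℕ, s + 1 ≠ -m} := by
  refine SummableLocallyUniformlyOn.differentiableOn isOpen_setOf_add_one_ne_neg_natCast
    (.of_locally_bounded_eventually isOpen_setOf_add_one_ne_neg_natCast fun K _ hK => ?_)
    fun n s hs => ?_
  · obtain ⟨R, hR⟩ := hK.isBounded.exists_norm_le
    refine ⟨_, summable_div_natCast_add_one_sq (2 * R + 1), ?_⟩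
    rw [Nat.cofinite_eq_atTop]
    filter_upwards [eventually_ge_atTop ⌈2 * R⌉₊] with n hn s hs
    exact norm_digammaTerm_le (hR s hs) ((Nat.le_ceil _).trans (by exact_mod_cast hn))
  · have hsn : s + (n + 1) ≠ 0 := fun h => hs n (by linear_combination h)
    unfold digammaTerm
    fun_prop (disch := exact hsn)

theorem digamma_add_one_eq_deriv_div (s : ℂ) :
    digamma (s + 1) = deriv (fun z => Gamma (z + 1)) s / Gamma (s + 1) := by
  rw [deriv_comp_add_const, digamma_def, logDeriv_apply]

theorem analyticOnNhd_digamma_add_one :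
    AnalyticOnNhd ℂ (fun s => digamma (s + 1)) {s : ℂ | ∀ m : ℕ, s + 1 ≠ -m} := by
  have hPi : AnalyticOnNhd ℂ (fun s => Gamma (s + 1)) {s : ℂ | ∀ m : ℕ, s + 1 ≠ -m} :=
    DifferentiableOn.analyticOnNhd (fun s hs =>
      ((differentiableAt_Gamma _ hs).comp s (by fun_prop)).differentiableWithinAt)
      isOpen_setOf_add_one_ne_neg_natCast
  simpa only [digamma_add_one_eq_deriv_div] using hPi.deriv.div hPi fun s hs => Gamma_ne_zero hs

theorem ofReal_add_one_ne_neg_natCast {x : ℝ} (hx : -1 < x) (m : ℕ) : (x : ℂ) + 1 ≠ -m := by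
  have hm : (0 : ℝ) ≤ m := m.cast_nonneg
  exact_mod_cast (by linarith : x + 1 ≠ -m)

theorem hasSum_digammaTerm_ofReal {x : ℝ} (hx : -1 < x) :
    HasSum (fun n => digammaTerm n x) (digamma (x + 1)) := by
  have hpartial (N : ℕ) : ∑ n ∈ Finset.range N, digammaTerm n x
      = digamma (x + 1) - ((logDeriv Real.Gamma ((N + 1 : ℝ) + x) - Real.log (N + 1) : ℝ) : ℂ) := by
    have hshift : digamma (x + 1 + N) = logDeriv Real.Gamma ((N + 1 : ℝ) + x) := by
      rw [show (x : ℂ) + 1 + N = ((N + 1 + x : ℝ) : ℂ) by push_cast; ring]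
      exact digamma_ofReal fun m h => by linarith [(Nat.cast_nonneg m : (0 : ℝ) ≤ m)]
    rw [sum_range_digammaTerm, ofReal_sub, ← hshift,
      digamma_add_nat (ofReal_add_one_ne_neg_natCast hx)]
    ring
  have hlim : Tendsto (fun N : ℕ => logDeriv Real.Gamma ((N + 1 : ℝ) + x) - Real.log (N + 1))
      atTop (𝓝 0) :=
    (Real.tendsto_logDeriv_Gamma_add_sub_log x).comp
      (tendsto_atTop_add_const_right _ 1 tendsto_natCast_atTop_atTop)
  rw [(summable_norm_digammaTerm _).of_norm.hasSum_iff_tendsto_nat, funext hpartial]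
  simpa using tendsto_const_nhds.sub ((continuous_ofReal.tendsto 0).comp hlim)

theorem hasSum_digammaTerm {s : ℂ} (hs : ∀ m : ℕ, s + 1 ≠ -m) :
    HasSum (fun n => digammaTerm n s) (digamma (s + 1)) := by
  have hreal : ∃ᶠ z in 𝓝[≠] (0 : ℂ), ∑' n, digammaTerm n z = digamma (z + 1) := by
    have hofReal : Tendsto ((↑) : ℝ → ℂ) (𝓝[≠] 0) (𝓝[≠] 0) :=
      continuous_ofReal.continuousWithinAt.tendsto_nhdsWithin fun _ _ ↦ by simp_all
    refine hofReal.frequently (Eventually.frequently ?_)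
    filter_upwards [nhdsWithin_le_nhds (eventually_gt_nhds (by norm_num : (-1 : ℝ) < 0))] with x hx
    exact (hasSum_digammaTerm_ofReal hx).tsum_eq
  have hzero : (0 : ℂ) ∈ {s : ℂ | ∀ m : ℕ, s + 1 ≠ -m} := by
    simpa using ofReal_add_one_ne_neg_natCast (x := 0) neg_one_lt_zero
  have heq : ∑' n, digammaTerm n s = digamma (s + 1) :=
    (differentiableOn_tsum_digammaTerm.analyticOnNhd isOpen_setOf_add_one_ne_neg_natCast
      ).eqOn_of_preconnected_of_frequently_eq analyticOnNhd_digamma_add_one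
      isPreconnected_setOf_add_one_ne_neg_natCast hzero hreal hs
  exact heq ▸ (summable_norm_digammaTerm s).of_norm.hasSum

/-- For `s` not a negative integer, the logarithmic derivative of `Π(s) := Γ(s+1)` is the
absolutely convergent series `∑_{n ≥ 1} (-1/(s+n) + log(n+1) - log n)`. -/
theorem digamma_series (s : ℂ) (hs : ∀ n : ℕ, 1 ≤ n → s ≠ -(n : ℂ)) :
    (Summable fun n : ℕ =>
      ‖-1 / (s + ((n : ℂ) + 1)) + (Real.log ((n : ℝ) + 2) : ℂ) - (Real.log ((n : ℝ) + 1) : ℂ)‖) ∧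
    HasSum
      (fun n : ℕ =>
        -1 / (s + ((n : ℂ) + 1)) + (Real.log ((n : ℝ) + 2) : ℂ) - (Real.log ((n : ℝ) + 1) : ℂ))
      (deriv (fun z : ℂ => Complex.Gamma (z + 1)) s / Complex.Gamma (s + 1)) := by
  have hs' : ∀ m : ℕ, s + 1 ≠ -m := fun m h =>
    hs (m + 1) (Nat.le_add_left 1 m) (by push_cast; linear_combination h)
  rw [← digamma_add_one_eq_deriv_div]
  exact ⟨summable_norm_digammaTerm s, hasSum_digammaTerm hs'⟩
end

section
/- For every real x with |x| < 1 (equivalently for x = p^{-s} with p prime and s > 0), one has x = -Σ_{n=1}^{∞} (μ(n)/n)·log(1 - xⁿ), the series converging absolutely; equivalently, e^x = Π_{n=1}^{∞} (1 - xⁿ)^{-μ(n)/n}. -/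
/-!
Expanding each logarithm, `-(μ(d)/d) log(1 - x^d) = ∑_{k ≥ 1} μ(d) x^{dk}/(dk)`. For `|x| < 1` the
resulting double series over `d, k ≥ 1` is absolutely summable, so it may be regrouped along the
hyperbolas `dk = n`, where the coefficient of `x^n/n` is `∑_{d ∣ n} μ(d)`: this is `1` for `n = 1`
and `0` otherwise, leaving exactly `x`.
-/

open ArithmeticFunction

theorem tsum_pnat_prod_eq_tsum_sum_divisorsAntidiagonal {E : Type*} [AddCommMonoid E]
    [TopologicalSpace E] [ContinuousAdd E] [T3Space E] {f : ℕ × ℕ → E}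
    (hf : Summable fun c : ℕ+ × ℕ+ => f (c.1, c.2)) :
    ∑' c : ℕ+ × ℕ+, f (c.1, c.2) = ∑' n : ℕ+, ∑ p ∈ (n : ℕ).divisorsAntidiagonal, f p := by
  rw [← sigmaAntidiagonalEquivProd.summable_iff] at hf
  refine (sigmaAntidiagonalEquivProd.tsum_eq _).symm.trans <|
    (hf.tsum_sigma' fun _ => (hasSum_fintype _).summable).trans <| tsum_congr fun n => ?_
  rw [tsum_fintype]
  exact Finset.sum_coe_sort _ _

theorem sum_divisors_moebius {R : Type*} [Ring R] (n : ℕ) :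
    ∑ d ∈ n.divisors, (moebius d : R) = if n = 1 then 1 else 0 := by
  have h := congrArg (· n) (coe_moebius_mul_coe_zeta (R := R))
  simpa only [coe_mul_zeta_apply, intCoe_apply, one_apply] using h

noncomputable def moebiusLogTerm (x : ℝ) (p : ℕ × ℕ) : ℝ :=
  moebius p.1 / (p.1 * p.2) * x ^ (p.1 * p.2)

theorem norm_moebiusLogTerm_le (x : ℝ) (d k : ℕ+) :
    ‖moebiusLogTerm x (d, k)‖ ≤ |x| ^ (d * k : ℕ) := by
  have hdk : (1 : ℝ) ≤ (d : ℕ) * (k : ℕ) := by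
    exact_mod_cast Nat.one_le_iff_ne_zero.2 (d * k).ne_zero
  rw [Real.norm_eq_abs, moebiusLogTerm, abs_mul, abs_div, abs_pow,
    abs_of_pos (a := ((d : ℕ) : ℝ) * (k : ℕ)) (by linarith)]
  refine mul_le_of_le_one_left (by positivity) ((div_le_one (by linarith)).2 ?_)
  exact (by exact_mod_cast abs_moebius_le_one : |(moebius d : ℝ)| ≤ 1).trans hdk

theorem summable_norm_moebiusLogTerm {x : ℝ} (hx : |x| < 1) :
    Summable fun c : ℕ+ × ℕ+ => ‖moebiusLogTerm x (c.1, c.2)‖ := by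
  have hgeom := summable_prod_mul_pow 0 (r := |x|) (by rwa [Real.norm_eq_abs, abs_abs])
  simp only [pow_zero, one_mul] at hgeom
  exact hgeom.of_nonneg_of_le (fun _ => norm_nonneg _) fun c => norm_moebiusLogTerm_le x c.1 c.2

theorem sum_divisorsAntidiagonal_moebiusLogTerm (x : ℝ) (n : ℕ) :
    ∑ p ∈ n.divisorsAntidiagonal, moebiusLogTerm x p = if n = 1 then x else 0 := by
  have hterm : ∀ p ∈ n.divisorsAntidiagonal, moebiusLogTerm x p = moebius p.1 * (x ^ n / n) := by
    intro p hp
    rw [moebiusLogTerm, ← Nat.cast_mul, (Nat.mem_divisorsAntidiagonal.mp hp).1]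
    ring
  rw [Finset.sum_congr rfl hterm, ← Finset.sum_mul,
    Nat.sum_divisorsAntidiagonal fun d _ => (moebius d : ℝ), sum_divisors_moebius]
  split_ifs with h <;> simp [h]

theorem tsum_moebiusLogTerm {x : ℝ} (hx : |x| < 1) :
    ∑' c : ℕ+ × ℕ+, moebiusLogTerm x (c.1, c.2) = x := by
  rw [tsum_pnat_prod_eq_tsum_sum_divisorsAntidiagonal (summable_norm_moebiusLogTerm hx).of_norm,
    tsum_eq_single 1 fun n hn => ?_]
  · simp [moebiusLogTerm]
  · simp [sum_divisorsAntidiagonal_moebiusLogTerm, PNat.coe_eq_one_iff, hn]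

theorem hasSum_moebiusLogTerm {x : ℝ} (hx : |x| < 1) (d : ℕ+) :
    HasSum (fun k : ℕ+ => moebiusLogTerm x (d, k))
      (-(moebius d / d * Real.log (1 - x ^ (d : ℕ)))) := by
  have hxd : |x ^ (d : ℕ)| < 1 := by
    rw [abs_pow]; exact pow_lt_one₀ (abs_nonneg x) hx d.ne_zero
  rw [hasSum_pnat_iff_hasSum_succ (f := fun k => moebiusLogTerm x (d, k)), ← mul_neg]
  have hterm (k : ℕ) : moebiusLogTerm x (d, k + 1) =
      moebius d / d * ((x ^ (d : ℕ)) ^ (k + 1) / (k + 1)) := by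
    simp only [moebiusLogTerm, ← pow_mul]
    push_cast
    field_simp
  simp_rw [hterm]
  exact (Real.hasSum_pow_div_log_of_abs_lt_one hxd).mul_left _

/-- For `|x| < 1`, `x = -∑_{n ≥ 1} (μ(n)/n)·log(1 - xⁿ)`, the series converging absolutely. -/
theorem moebius_log_series (x : ℝ) (hx : |x| < 1) :
    (Summable fun n : ℕ =>
      ‖((moebius (n + 1) : ℝ) / ((n : ℝ) + 1)) * Real.log (1 - x ^ (n + 1))‖) ∧
    x = -∑' n : ℕ, ((moebius (n + 1) : ℝ) / ((n : ℝ) + 1)) * Real.log (1 - x ^ (n + 1)) := by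
  set a : ℕ → ℝ := fun n => moebius n / n * Real.log (1 - x ^ n)
  have ha (n : ℕ) : a (n + 1) = moebius (n + 1) / ((n : ℝ) + 1) * Real.log (1 - x ^ (n + 1)) := by
    simp only [a, Nat.cast_add_one]
  have hrow := hasSum_moebiusLogTerm hx
  have hnorm := summable_norm_moebiusLogTerm hx
  have hsummable : Summable fun d : ℕ+ => ‖a d‖ := by
    refine ((summable_prod_of_nonneg fun _ => norm_nonneg _).mp hnorm).2.of_nonneg_of_le
      (fun _ => norm_nonneg _) fun d => ?_
    rw [← norm_neg, ← (hrow d).tsum_eq]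
    exact norm_tsum_le_tsum_norm (hnorm.prod_factor d)
  refine ⟨?_, ?_⟩
  · simpa only [ha] using (summable_pnat_iff_summable_succ (f := fun n => ‖a n‖)).mp hsummable
  · calc x = ∑' c : ℕ+ × ℕ+, moebiusLogTerm x (c.1, c.2) := (tsum_moebiusLogTerm hx).symm
      _ = ∑' d : ℕ+, -a d := by
        rw [hnorm.of_norm.tsum_prod]
        exact tsum_congr fun d => (hrow d).tsum_eq
      _ = _ := by simp only [tsum_neg, tsum_pnat_eq_tsum_succ, ha]
end

section
/- For every real s > 1, the prime zeta function satisfies P(s) = Σ_{n=1}^{∞} (μ(n)/n)·log ζ(ns), the series on the right converging absolutely; equivalently, e^{P(s)} = Π_{n=1}^{∞} ζ(ns)^{μ(n)/n}. -/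
/-!
Taking logarithms in the Euler product gives `log ζ(s) = ∑_p -log (1 - p^{-s})`. For a single
prime, put `x = p^{-s}`: expanding `-log (1 - x^n) = ∑_k x^{nk}/k` and collecting the terms
with `nk = m`, the sum `∑_n μ(n)/n · (-log (1 - x^n))` becomes
`∑_m (x^m/m) ∑_{n ∣ m} μ(n) = x`; in other words the Dirichlet convolution of `μ(n)/n` with
`1/n` is the unit. Summing over `p` and interchanging the sums over `n` and `p`, which is
legitimate since `|μ(n)/n · log (1 - p^{-ns})| ≤ 2 p^{-s} 2^{1-n}`, gives the theorem.
-/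

open ArithmeticFunction

/-- The prime zeta function `P(s) = ∑_p p^{-s}`. -/
noncomputable def primeZeta (s : ℝ) : ℝ := ∑' p : Nat.Primes, (p : ℝ) ^ (-s)

open scoped ArithmeticFunction.Moebius ArithmeticFunction.zeta

theorem Real.abs_log_one_sub_le_two_mul_abs {x : ℝ} (hx : |x| ≤ 1 / 2) :
    |Real.log (1 - x)| ≤ 2 * |x| := by
  have h := Real.abs_log_sub_add_sum_range_le (hx.trans_lt (by norm_num)) 0
  simp only [Finset.range_zero, Finset.sum_empty, zero_add, pow_one] at h
  calc |Real.log (1 - x)| ≤ |x| / (1 - |x|) := h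
    _ ≤ |x| / (1 / 2) := by gcongr; linarith
    _ = 2 * |x| := by ring

theorem Nat.Primes.rpow_neg_le_half (p : Nat.Primes) {x : ℝ} (hx : 1 ≤ x) :
    (p : ℝ) ^ (-x) ≤ 1 / 2 := by
  have hp : (2 : ℝ) ≤ p := by exact_mod_cast p.2.two_le
  calc (p : ℝ) ^ (-x) ≤ (2 : ℝ) ^ (-x) :=
        Real.rpow_le_rpow_of_nonpos (by norm_num) hp (by linarith)
    _ ≤ (2 : ℝ) ^ (-1 : ℝ) :=
        Real.rpow_le_rpow_of_exponent_le (by norm_num) (by linarith : -x ≤ -1)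
    _ = 1 / 2 := by norm_num [Real.rpow_neg_one]

theorem hasSum_neg_log_one_sub_prime_rpow {x : ℝ} (hx : 1 < x) :
    HasSum (fun p : Nat.Primes => -Real.log (1 - (p : ℝ) ^ (-x)))
      (Real.log (riemannZeta x).re) := by
  have hsum : Summable fun p : Nat.Primes => -Real.log (1 - (p : ℝ) ^ (-x)) := by
    refine Summable.of_norm_bounded
      ((Nat.Primes.summable_rpow.mpr (by linarith : -x < -1)).mul_left 2) fun p => ?_
    have hp := p.rpow_neg_le_half hx.le
    have hp0 : 0 ≤ (p : ℝ) ^ (-x) := by positivity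
    simpa [abs_of_nonneg hp0] using
      Real.abs_log_one_sub_le_two_mul_abs (x := (p : ℝ) ^ (-x)) (by rwa [abs_of_nonneg hp0])
  have hterm : ∀ p : Nat.Primes, -Complex.log (1 - (p : ℂ) ^ (-(x : ℂ))) =
      ((-Real.log (1 - (p : ℝ) ^ (-x)) : ℝ) : ℂ) := fun p => by
    have hp := p.rpow_neg_le_half hx.le
    rw [Complex.ofReal_neg, Complex.ofReal_log (by linarith), Complex.ofReal_sub,
      Complex.ofReal_cpow (by positivity)]
    simp
  have hexp := riemannZeta_eulerProduct_exp_log (s := x) (by simpa using hx)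
  rw [tsum_congr hterm, ← Complex.ofReal_tsum, ← Complex.ofReal_exp] at hexp
  rw [← hexp, Complex.ofReal_re, Real.log_exp]
  exact hsum.hasSum

theorem ArithmeticFunction.hasSum_mul_apply_mul_of_hasSum_prod {R : Type*} [NormedCommRing R]
    [CompleteSpace R] {f g : ArithmeticFunction R} {h : ℕ → R} {a : R}
    (hfg : HasSum (fun q : ℕ × ℕ => f q.1 * g q.2 * h (q.1 * q.2)) a) :
    HasSum (fun m => (f * g) m * h m) a := by
  refine (hfg.tsum_fiberwise (fun q => q.1 * q.2)).congr_fun fun m => ?_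
  rw [tsum_subtype (_ ⁻¹' {m}) (fun q : ℕ × ℕ => f q.1 * g q.2 * h (q.1 * q.2)),
    tsum_eq_sum (s := m.divisorsAntidiagonal), mul_apply, Finset.sum_mul]
  · refine Finset.sum_congr rfl fun q hq => ?_
    rw [Set.indicator_of_mem (by simpa using (Nat.mem_divisorsAntidiagonal.mp hq).1)]
    simp [(Nat.mem_divisorsAntidiagonal.mp hq).1]
  · rintro ⟨n, k⟩ hq
    by_cases hm : n * k = m
    -- the fibre over `0` is infinite, but on it `f n = f 0 = 0` or `g k = g 0 = 0`
    · obtain rfl : m = 0 := by simpa [Nat.mem_divisorsAntidiagonal, hm] using hq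
      rw [Set.indicator_of_mem (by simpa using hm)]
      rcases Nat.mul_eq_zero.mp hm with rfl | rfl <;> simp
    · exact Set.indicator_of_notMem (by simpa using hm) _

theorem ArithmeticFunction.moebius_pdiv_id_mul_zeta_pdiv_id {K : Type*} [Field K] :
    (μ : ArithmeticFunction K).pdiv ↑ArithmeticFunction.id *
      (ζ : ArithmeticFunction K).pdiv ↑ArithmeticFunction.id = 1 := by
  ext m
  have hterm : ∀ q ∈ m.divisorsAntidiagonal,
      (μ : ArithmeticFunction K).pdiv ↑ArithmeticFunction.id q.1 *
        (ζ : ArithmeticFunction K).pdiv ↑ArithmeticFunction.id q.2 = μ q.1 * (m : K)⁻¹ := by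
    intro q hq
    obtain ⟨rfl, hm⟩ := Nat.mem_divisorsAntidiagonal.mp hq
    simp [pdiv_apply, zeta_apply, (Nat.mul_ne_zero_iff.mp hm).2, div_eq_mul_inv]
    ring
  have hsum : ∑ d ∈ m.divisors, (μ d : K) = ((μ : ArithmeticFunction K) * ζ) m := by
    rw [coe_mul_zeta_apply]
    simp
  rw [mul_apply, Finset.sum_congr rfl hterm, ← Finset.sum_mul,
    Nat.sum_divisorsAntidiagonal (fun a _ => (μ a : K)), hsum, coe_moebius_mul_coe_zeta,
    one_apply]
  split_ifs with h <;> simp [h]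

theorem ArithmeticFunction.abs_moebius_div_le_one (n : ℕ) : |(μ n : ℝ) / n| ≤ 1 := by
  rcases Nat.eq_zero_or_pos n with rfl | hn
  · simp
  rw [abs_div, Nat.abs_cast, div_le_one (by positivity)]
  calc |(μ n : ℝ)| ≤ 1 := by rw [← Int.cast_abs]; exact_mod_cast abs_moebius_le_one
    _ ≤ n := by exact_mod_cast hn

theorem Real.hasSum_inv_mul_pow_log_of_abs_lt_one {y : ℝ} (hy : |y| < 1) :
    HasSum (fun k : ℕ => (k : ℝ)⁻¹ * y ^ k) (-Real.log (1 - y)) := by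
  rw [← hasSum_nat_add_iff' 1]
  simpa [div_eq_inv_mul] using Real.hasSum_pow_div_log_of_abs_lt_one hy

theorem summable_moebius_div_mul_inv_mul_pow {x : ℝ} (hx : |x| < 1) :
    Summable fun q : ℕ × ℕ => (μ q.1 : ℝ) / q.1 * (q.2 : ℝ)⁻¹ * x ^ (q.1 * q.2) := by
  have hgeom : Summable fun n : ℕ => |x| ^ (n - 1) :=
    (summable_nat_add_iff 1).mp (by simpa using summable_geometric_of_lt_one (abs_nonneg x) hx)
  refine Summable.of_norm_bounded (hgeom.mul_of_nonneg hgeom (fun _ => by positivity)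
    (fun _ => by positivity)) ?_
  rintro ⟨_ | n, _ | k⟩
  · simp
  · simp
  · simp
  rw [norm_mul, norm_mul, norm_pow, Real.norm_eq_abs, Real.norm_eq_abs]
  calc _ ≤ 1 * 1 * |x| ^ (n + k) := by
        gcongr
        · exact abs_moebius_div_le_one _
        · rw [abs_inv, Nat.abs_cast]; exact Nat.cast_inv_le_one _
        · exact pow_le_pow_of_le_one (abs_nonneg x) hx.le (by nlinarith)
    _ = _ := by simp [pow_add]

theorem hasSum_moebius_div_mul_neg_log_one_sub_pow {x : ℝ} (hx : |x| < 1) :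
    HasSum (fun n : ℕ => (μ (n + 1) : ℝ) / (n + 1) * -Real.log (1 - x ^ (n + 1))) x := by
  set f : ArithmeticFunction ℝ := (μ : ArithmeticFunction ℝ).pdiv ↑ArithmeticFunction.id
  set g : ArithmeticFunction ℝ := (ζ : ArithmeticFunction ℝ).pdiv ↑ArithmeticFunction.id
  have hf : ∀ n, f n = μ n / n := fun n => by simp [f, pdiv_apply]
  have hg : ∀ k, g k = (k : ℝ)⁻¹ := fun k => by
    rcases eq_or_ne k 0 with rfl | hk <;> simp [g, pdiv_apply, zeta_apply, *]
  have hsum : Summable fun q : ℕ × ℕ => f q.1 * g q.2 * x ^ (q.1 * q.2) := by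
    simpa only [hf, hg] using summable_moebius_div_mul_inv_mul_pow hx
  have hrow : ∀ n, HasSum (fun k => f n * g k * x ^ (n * k)) (f n * -Real.log (1 - x ^ n)) := by
    rintro (_ | n)
    · simp [hf]
    have hy : |x ^ (n + 1)| < 1 := by
      rw [abs_pow]; exact pow_lt_one₀ (abs_nonneg x) hx (by omega)
    simpa [hg, pow_mul, mul_assoc] using
      (Real.hasSum_inv_mul_pow_log_of_abs_lt_one hy).mul_left (f (n + 1))
  have hfg : f * g = 1 := moebius_pdiv_id_mul_zeta_pdiv_id
  have hconv := hasSum_mul_apply_mul_of_hasSum_prod hsum.hasSum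
  rw [hfg] at hconv
  have htotal := hconv.unique ((hasSum_ite_eq 1 x).congr_fun fun m => by
    by_cases h : m = 1 <;> simp [one_apply, h])
  have := (hasSum_nat_add_iff' 1).mpr (htotal ▸ hsum.hasSum.prod_fiberwise hrow)
  simpa [hf] using this

theorem norm_moebius_div_mul_neg_log_one_sub_pow_le {x : ℝ} (hx0 : 0 ≤ x) (hx : x ≤ 1 / 2)
    (n : ℕ) :
    ‖(μ (n + 1) : ℝ) / (n + 1) * -Real.log (1 - x ^ (n + 1))‖ ≤ 2 * (1 / 2) ^ n * x := by
  have hpow : x ^ (n + 1) ≤ x * (1 / 2) ^ n := by rw [pow_succ']; gcongr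
  have hpow_le : x ^ (n + 1) ≤ 1 / 2 := (pow_le_of_le_one hx0 (by linarith) (by omega)).trans hx
  calc _ ≤ 1 * (2 * |x ^ (n + 1)|) := by
        rw [norm_mul, norm_neg, Real.norm_eq_abs, Real.norm_eq_abs]
        gcongr
        · exact_mod_cast abs_moebius_div_le_one (n + 1)
        · exact Real.abs_log_one_sub_le_two_mul_abs (by rwa [abs_of_nonneg (by positivity)])
    _ ≤ 2 * (1 / 2) ^ n * x := by rw [one_mul, abs_of_nonneg (by positivity)]; linarith

theorem hasSum_neg_log_one_sub_prime_rpow_pow {s : ℝ} (hs : 1 < s) (n : ℕ) :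
    HasSum (fun p : Nat.Primes => -Real.log (1 - ((p : ℝ) ^ (-s)) ^ (n + 1)))
      (Real.log (riemannZeta (((n : ℂ) + 1) * s)).re) := by
  have hns : 1 < ((n : ℝ) + 1) * s := by nlinarith [(n.cast_nonneg : (0 : ℝ) ≤ n)]
  have hpow (p : Nat.Primes) :
      ((p : ℝ) ^ (-s)) ^ (n + 1) = (p : ℝ) ^ (-(((n : ℝ) + 1) * s)) := by
    rw [← Real.rpow_natCast, ← Real.rpow_mul (by positivity)]
    push_cast
    ring_nf
  simpa [hpow] using hasSum_neg_log_one_sub_prime_rpow hns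

/-- For real `ns > 1` the value `ζ(ns)` is real, so it is recorded by its real part. -/
theorem primeZeta_eq_moebius_log_zeta (s : ℝ) (hs : 1 < s) :
    (Summable fun n : ℕ =>
      ‖((moebius (n + 1) : ℝ) / ((n : ℝ) + 1)) *
        Real.log ((riemannZeta (((n : ℂ) + 1) * s)).re)‖) ∧
    primeZeta s =
      ∑' n : ℕ, ((moebius (n + 1) : ℝ) / ((n : ℝ) + 1)) *
        Real.log ((riemannZeta (((n : ℂ) + 1) * s)).re) := by
  set G : ℕ → Nat.Primes → ℝ := fun n p =>
    (μ (n + 1) : ℝ) / (n + 1) * -Real.log (1 - ((p : ℝ) ^ (-s)) ^ (n + 1))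
  have hrow (n : ℕ) : HasSum (G n)
      ((μ (n + 1) : ℝ) / (n + 1) * Real.log (riemannZeta (((n : ℂ) + 1) * s)).re) :=
    (hasSum_neg_log_one_sub_prime_rpow_pow hs n).mul_left _
  have hcol (p : Nat.Primes) : HasSum (fun n => G n p) ((p : ℝ) ^ (-s)) :=
    hasSum_moebius_div_mul_neg_log_one_sub_pow (by
      rw [abs_of_nonneg (by positivity)]; linarith [p.rpow_neg_le_half hs.le])
  have hG : Summable fun q : ℕ × Nat.Primes => ‖G q.1 q.2‖ :=
    .of_nonneg_of_le (fun _ => norm_nonneg _)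
      (fun q => norm_moebius_div_mul_neg_log_one_sub_pow_le (by positivity)
        (q.2.rpow_neg_le_half hs.le) q.1)
      ((summable_geometric_two.mul_left 2).mul_of_nonneg
        (Nat.Primes.summable_rpow.mpr (by linarith : -s < -1))
        (fun _ => by positivity) (fun _ => by positivity))
  refine ⟨.of_nonneg_of_le (fun _ => norm_nonneg _) (fun n => ?_) hG.prod, ?_⟩
  · rw [← (hrow n).tsum_eq]
    exact norm_tsum_le_tsum_norm (hG.prod_factor n)
  · calc primeZeta s = ∑' p, ∑' n, G n p := tsum_congr fun p => (hcol p).tsum_eq.symm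
      _ = ∑' n, ∑' p, G n p := hG.of_norm.tsum_comm
      _ = _ := tsum_congr fun n => (hrow n).tsum_eq
end

section
/- For every real s > 1, the prime zeta function P(s) = Σ_p p^{-s} is differentiable at s, with derivative P′(s) = Σ_{n=1}^{∞} μ(n)·ζ′(ns)/ζ(ns) given by an absolutely convergent series. Equivalently, P′(s) = -Σ_p (log p)·p^{-s}. -/
/-!
Since `-ζ'/ζ(x) = ∑_p ∑_{k ≥ 1} log p · p^{-kx}` for `x > 1`, the series `∑_n μ(n) ζ'(ns)/ζ(ns)`
is `-∑_p log p ∑_{n,k ≥ 1} μ(n) (p^{-s})^{nk}`, and the Lambert series identity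
`∑_{n,k ≥ 1} μ(n) t^{nk} = ∑_m t^m ∑_{d ∣ m} μ(d) = t` collapses the inner sum to `p^{-s}`.
All rearrangements are justified by absolute convergence: `log p · (p^{-s})^{nk}` is dominated by
`log p · p^{-s} · 2^{1-n} · 2^{1-k}`. Termwise differentiation of `∑_p p^{-s}` gives the other
expression `-∑_p log p · p^{-s}` for the derivative.
-/

open ArithmeticFunction

open scoped ArithmeticFunction.Moebius LSeries.notation

theorem sum_divisorsAntidiagonal_moebius {R : Type*} [Ring R] (N : ℕ) :
    ∑ d ∈ N.divisorsAntidiagonal, (μ d.1 : R) = if N = 1 then 1 else 0 := by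
  rw [Nat.sum_divisorsAntidiagonal (fun i _ => (μ i : R))]
  simp_rw [← intCoe_apply]
  rw [← coe_mul_zeta_apply, coe_moebius_mul_coe_zeta, one_apply]

theorem norm_moebius_le_one {𝕜 : Type*} [NormedDivisionRing 𝕜] (n : ℕ) : ‖(μ n : 𝕜)‖ ≤ 1 := by
  rcases moebius_eq_or n with h | h | h <;> simp [h]

theorem pow_mul_succ_le {R : Type*} [Semiring R] [PartialOrder R] [IsOrderedRing R] {r : R}
    (hr₀ : 0 ≤ r) (hr₁ : r ≤ 1) (m n : ℕ) :
    r ^ ((m + 1) * (n + 1)) ≤ r * r ^ m * r ^ n := by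
  rw [← pow_succ', ← pow_add]
  exact pow_le_pow_of_le_one hr₀ hr₁ (by nlinarith)

section Lambert

variable {𝕜 : Type*} [NormedField 𝕜] [CompleteSpace 𝕜] {t : 𝕜}

theorem summable_moebius_mul_pow_mul (ht : ‖t‖ < 1) :
    Summable fun q : ℕ × ℕ => (μ (q.1 + 1) : 𝕜) * t ^ ((q.1 + 1) * (q.2 + 1)) := by
  have hgeom := summable_geometric_of_lt_one (norm_nonneg t) ht
  refine .of_norm_bounded ((hgeom.mul_of_nonneg hgeom (fun _ => by positivity)
    (fun _ => by positivity)).mul_left ‖t‖) fun q => ?_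
  rw [norm_mul, norm_pow, ← mul_assoc]
  exact (mul_le_of_le_one_left (by positivity) (norm_moebius_le_one _)).trans
    (pow_mul_succ_le (norm_nonneg t) ht.le _ _)

theorem hasSum_moebius_mul_pow_mul (ht : ‖t‖ < 1) :
    HasSum (fun q : ℕ × ℕ => (μ (q.1 + 1) : 𝕜) * t ^ ((q.1 + 1) * (q.2 + 1))) t := by
  let e : ℕ × ℕ ≃ Σ N : ℕ+, (N : ℕ).divisorsAntidiagonal :=
    (Equiv.pnatEquivNat.prodCongr Equiv.pnatEquivNat).symm.trans sigmaAntidiagonalEquivProd.symm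
  let g : (Σ N : ℕ+, (N : ℕ).divisorsAntidiagonal) → 𝕜 := fun x => μ x.2.1.1 * t ^ (x.1 : ℕ)
  have hge : g ∘ e = fun q : ℕ × ℕ => (μ (q.1 + 1) : 𝕜) * t ^ ((q.1 + 1) * (q.2 + 1)) := rfl
  have hg : Summable g := by
    rw [← e.summable_iff, hge]
    exact summable_moebius_mul_pow_mul ht
  have hfiber (N : ℕ+) : HasSum (fun d => g ⟨N, d⟩) (if N = 1 then t else 0) := by
    convert hasSum_fintype (fun d => g ⟨N, d⟩)
    rw [Finset.sum_coe_sort (N : ℕ).divisorsAntidiagonal (fun d => (μ d.1 : 𝕜) * t ^ (N : ℕ)),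
      ← Finset.sum_mul, sum_divisorsAntidiagonal_moebius]
    split_ifs with h <;> simp_all
  have hsum : ∑' x, g x = t := (hg.hasSum.sigma hfiber).unique (hasSum_ite_eq 1 t)
  rw [← hge, e.hasSum_iff, ← hsum]
  exact hg.hasSum

end Lambert

theorem LSeries.term_vonMangoldt_prime_pow {p : ℕ} (hp : p.Prime) (x : ℝ) (k : ℕ) :
    LSeries.term ↗Λ x (p ^ (k + 1)) = ((Real.log p * ((p : ℝ) ^ (-x)) ^ (k + 1) : ℝ) : ℂ) := by
  have hp₀ : (0 : ℝ) ≤ p := Nat.cast_nonneg p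
  rw [LSeries.term_of_ne_zero (pow_ne_zero _ hp.ne_zero), vonMangoldt_apply_pow k.succ_ne_zero,
    vonMangoldt_apply_prime hp, ← Complex.ofReal_natCast, ← Complex.ofReal_cpow (by positivity),
    ← Complex.ofReal_div, Real.rpow_neg hp₀, inv_pow, Real.rpow_pow_comm hp₀, Nat.cast_pow,
    div_eq_mul_inv]

theorem hasSum_primePow_neg_deriv_riemannZeta_div {x : ℝ} (hx : 1 < x) :
    HasSum (fun q : Nat.Primes × ℕ => ((Real.log q.1 * ((q.1 : ℝ) ^ (-x)) ^ (q.2 + 1) : ℝ) : ℂ))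
      (-(deriv riemannZeta x / riemannZeta x)) := by
  have hx' : 1 < (x : ℂ).re := by simpa using hx
  have hL : HasSum _ _ := (LSeriesSummable_vonMangoldt hx').LSeriesHasSum
  rw [LSeries_vonMangoldt_eq_deriv_riemannZeta_div hx', neg_div,
    ← (Subtype.val_injective.comp Nat.Primes.prodNatEquiv.injective).hasSum_iff] at hL
  · convert hL using 2 with q
    rw [Function.comp_apply, Function.comp_apply, Nat.Primes.coe_prodNatEquiv_apply,
      LSeries.term_vonMangoldt_prime_pow q.1.prop]
  · intro n hn
    by_contra hterm
    have hΛ : IsPrimePow n :=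
      vonMangoldt_ne_zero_iff.mp fun h => hterm (by simp [LSeries.term_def, h])
    exact hn ⟨Nat.Primes.prodNatEquiv.symm ⟨n, hΛ⟩, by
      rw [Function.comp_apply, Equiv.apply_symm_apply]⟩

namespace Nat.Primes

theorem summable_log_mul_rpow_neg {x : ℝ} (hx : 1 < x) :
    Summable fun p : Nat.Primes => Real.log p * (p : ℝ) ^ (-x) := by
  have h := Complex.summable_ofReal.mp (hasSum_primePow_neg_deriv_riemannZeta_div hx).summable
  simpa [Function.comp_def] using
    h.comp_injective (i := fun p : Nat.Primes => (p, 0)) fun p q h => (Prod.mk.inj h).1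

theorem rpow_neg_le_half_s9 {s : ℝ} (hs : 1 ≤ s) (p : Nat.Primes) : (p : ℝ) ^ (-s) ≤ 1 / 2 := by
  have hp : (2 : ℝ) ≤ p := by exact_mod_cast p.prop.two_le
  calc (p : ℝ) ^ (-s) ≤ (p : ℝ) ^ (-1 : ℝ) :=
        Real.rpow_le_rpow_of_exponent_le (by linarith) (by linarith)
    _ ≤ 1 / 2 := by rw [Real.rpow_neg_one, one_div]; exact inv_anti₀ two_pos hp

end Nat.Primes

/-- The index `(n, p, k)` stands for `(n + 1, p, k + 1)`: this is the `p^{k+1}`-term of the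
prime-power expansion of `-ζ'/ζ((n + 1) s)`. -/
noncomputable def logPrimePowTerm (s : ℝ) (w : ℕ × Nat.Primes × ℕ) : ℝ :=
  Real.log w.2.1 * ((w.2.1 : ℝ) ^ (-s)) ^ ((w.1 + 1) * (w.2.2 + 1))

namespace logPrimePowTerm

variable {s : ℝ}

theorem nonneg (s : ℝ) (w : ℕ × Nat.Primes × ℕ) : 0 ≤ logPrimePowTerm s w :=
  mul_nonneg (Real.log_nonneg (by exact_mod_cast w.2.1.prop.one_lt.le)) (by positivity)

theorem le_geometric (hs : 1 < s) (w : ℕ × Nat.Primes × ℕ) :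
    logPrimePowTerm s w ≤
      (1 / 2) ^ w.1 * (Real.log w.2.1 * (w.2.1 : ℝ) ^ (-s) * (1 / 2) ^ w.2.2) := by
  obtain ⟨n, p, k⟩ := w
  have hlog : 0 ≤ Real.log p := Real.log_nonneg (by exact_mod_cast p.prop.one_lt.le)
  have ht := Nat.Primes.rpow_neg_le_half_s9 hs.le p
  calc logPrimePowTerm s (n, p, k)
      ≤ Real.log p * ((p : ℝ) ^ (-s) * ((p : ℝ) ^ (-s)) ^ n * ((p : ℝ) ^ (-s)) ^ k) :=
        mul_le_mul_of_nonneg_left (pow_mul_succ_le (by positivity) (by linarith) n k) hlog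
    _ ≤ Real.log p * ((p : ℝ) ^ (-s) * (1 / 2) ^ n * (1 / 2) ^ k) := by gcongr
    _ = _ := by ring

theorem summable (hs : 1 < s) : Summable (logPrimePowTerm s) := by
  have hgeom := summable_geometric_two
  refine .of_nonneg_of_le (nonneg s) (le_geometric hs) (hgeom.mul_of_nonneg
    ((Nat.Primes.summable_log_mul_rpow_neg hs).mul_of_nonneg hgeom ?_ ?_) ?_ ?_) <;>
  intro <;> positivity

theorem hasSum_moebius_mul (hs : 1 < s) (p : Nat.Primes) :
    HasSum (fun v : ℕ × ℕ => (μ (v.1 + 1) : ℝ) * logPrimePowTerm s (v.1, p, v.2))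
      (Real.log p * (p : ℝ) ^ (-s)) := by
  have ht : ‖(p : ℝ) ^ (-s)‖ < 1 := by
    rw [Real.norm_of_nonneg (by positivity)]
    linarith [Nat.Primes.rpow_neg_le_half_s9 hs.le p]
  refine ((hasSum_moebius_mul_pow_mul ht).mul_left (Real.log p)).congr_fun fun v => ?_
  simp only [logPrimePowTerm]
  ring

theorem hasSum_neg_deriv_riemannZeta_div (hs : 1 < s) (n : ℕ) :
    HasSum (fun q : Nat.Primes × ℕ => (logPrimePowTerm s (n, q) : ℂ))
      (-(deriv riemannZeta (((n : ℂ) + 1) * s) / riemannZeta (((n : ℂ) + 1) * s))) := by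
  have hx : 1 < ((n : ℝ) + 1) * s := by nlinarith [(n.cast_nonneg : (0 : ℝ) ≤ n)]
  convert hasSum_primePow_neg_deriv_riemannZeta_div hx using 2 with q
  · rw [logPrimePowTerm, pow_mul, ← Real.rpow_mul_natCast (Nat.cast_nonneg _)]
    push_cast
    ring_nf
  · push_cast; ring_nf

end logPrimePowTerm

theorem summable_norm_moebius_mul_deriv_riemannZeta_div {s : ℝ} (hs : 1 < s) :
    Summable fun n : ℕ =>
      ‖(μ (n + 1) : ℂ) *
        (deriv riemannZeta (((n : ℂ) + 1) * s) / riemannZeta (((n : ℂ) + 1) * s))‖ := by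
  refine .of_nonneg_of_le (fun _ => norm_nonneg _) (fun n => ?_) (logPrimePowTerm.summable hs).prod
  rw [norm_mul, ← norm_neg (_ / _)]
  refine (mul_le_of_le_one_left (norm_nonneg _) (norm_moebius_le_one _)).trans ?_
  refine (logPrimePowTerm.hasSum_neg_deriv_riemannZeta_div hs n).norm_le_of_bounded
    ((logPrimePowTerm.summable hs).prod_factor n).hasSum fun q => ?_
  rw [Complex.norm_real, Real.norm_of_nonneg (logPrimePowTerm.nonneg s _)]

theorem tsum_moebius_mul_deriv_riemannZeta_div {s : ℝ} (hs : 1 < s) :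
    ∑' n : ℕ, (μ (n + 1) : ℝ) *
        (deriv riemannZeta (((n : ℂ) + 1) * s) / riemannZeta (((n : ℂ) + 1) * s)).re
      = -∑' p : Nat.Primes, Real.log p * (p : ℝ) ^ (-s) := by
  let F : ℕ × Nat.Primes × ℕ → ℝ := fun w => μ (w.1 + 1) * logPrimePowTerm s w
  have hF : Summable F := .of_norm_bounded (logPrimePowTerm.summable hs) fun w => by
    rw [norm_mul, Real.norm_of_nonneg (logPrimePowTerm.nonneg s w)]
    exact mul_le_of_le_one_left (logPrimePowTerm.nonneg s w) (norm_moebius_le_one _)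
  have hn : HasSum (fun n : ℕ => -((μ (n + 1) : ℝ) *
      (deriv riemannZeta (((n : ℂ) + 1) * s) / riemannZeta (((n : ℂ) + 1) * s)).re)) (∑' w, F w) :=
    hF.hasSum.prod_fiberwise fun n => by
      simpa [mul_neg] using
        (Complex.hasSum_re (logPrimePowTerm.hasSum_neg_deriv_riemannZeta_div hs n)).mul_left
          (μ (n + 1) : ℝ)
  let e : Nat.Primes × ℕ × ℕ ≃ ℕ × Nat.Primes × ℕ :=
    { toFun := fun w => (w.2.1, w.1, w.2.2), invFun := fun w => (w.2.1, w.1, w.2.2),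
      left_inv := fun _ => rfl, right_inv := fun _ => rfl }
  have hp : HasSum (fun p : Nat.Primes => Real.log p * (p : ℝ) ^ (-s)) (∑' w, F w) :=
    (e.hasSum_iff.mpr hF.hasSum).prod_fiberwise (logPrimePowTerm.hasSum_moebius_mul hs)
  rw [hp.tsum_eq, ← hn.tsum_eq, tsum_neg, neg_neg]

theorem hasDerivAt_primeZeta {s : ℝ} (hs : 1 < s) :
    HasDerivAt primeZeta (-∑' p : Nat.Primes, Real.log p * (p : ℝ) ^ (-s)) s := by
  have hderiv (p : Nat.Primes) (y : ℝ) :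
      HasDerivAt (fun x => (p : ℝ) ^ (-x)) (-(Real.log p * (p : ℝ) ^ (-y))) y := by
    have hp : (0 : ℝ) < p := by exact_mod_cast p.prop.pos
    simpa using (hasDerivAt_neg y).const_rpow hp
  have hbound (p : Nat.Primes) (y : ℝ) (hy : y ∈ Set.Ioi ((1 + s) / 2)) :
      ‖-(Real.log p * (p : ℝ) ^ (-y))‖ ≤ Real.log p * (p : ℝ) ^ (-((1 + s) / 2)) := by
    have hp : (1 : ℝ) ≤ p := by exact_mod_cast p.prop.one_lt.le
    rw [norm_neg, Real.norm_of_nonneg (by positivity)]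
    exact mul_le_mul_of_nonneg_left
      (Real.rpow_le_rpow_of_exponent_le hp (by linarith [Set.mem_Ioi.mp hy])) (Real.log_nonneg hp)
  have hs' : s ∈ Set.Ioi ((1 + s) / 2) := Set.mem_Ioi.mpr (by linarith)
  rw [← tsum_neg]
  exact hasDerivAt_tsum_of_isPreconnected (Nat.Primes.summable_log_mul_rpow_neg (by linarith))
    isOpen_Ioi isPreconnected_Ioi (fun p y _ => hderiv p y) hbound hs'
    (Nat.Primes.summable_rpow.mpr (by linarith)) hs'

/-- For real `s > 1`, `P` is differentiable at `s` with derivative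
`P′(s) = ∑_{n ≥ 1} μ(n)·ζ′(ns)/ζ(ns)`, an absolutely convergent series; equivalently,
`P′(s) = -∑_p (log p)·p^{-s}`. -/
theorem primeZeta_hasDerivAt (s : ℝ) (hs : 1 < s) :
    (Summable fun n : ℕ =>
      ‖(moebius (n + 1) : ℂ) *
        (deriv riemannZeta (((n : ℂ) + 1) * s) / riemannZeta (((n : ℂ) + 1) * s))‖) ∧
    HasDerivAt primeZeta
      (∑' n : ℕ, (moebius (n + 1) : ℝ) *
        (deriv riemannZeta (((n : ℂ) + 1) * s) / riemannZeta (((n : ℂ) + 1) * s)).re) s ∧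
    (∑' n : ℕ, (moebius (n + 1) : ℝ) *
        (deriv riemannZeta (((n : ℂ) + 1) * s) / riemannZeta (((n : ℂ) + 1) * s)).re)
      = -∑' p : Nat.Primes, Real.log p * (p : ℝ) ^ (-s) := by
  refine ⟨summable_norm_moebius_mul_deriv_riemannZeta_div hs, ?_,
    tsum_moebius_mul_deriv_riemannZeta_div hs⟩
  rw [tsum_moebius_mul_deriv_riemannZeta_div hs]
  exact hasDerivAt_primeZeta hs
end

section
/- For every real x > 0 with x ≠ 1, one has ∫₀^∞ x·t^{x-1}/(e^t + 1) dt = (1 - 2^{1-x})·ζ(x)·Γ(x+1), where for 0 < x < 1 the value ζ(x) is that of the analytic continuation of the Riemann zeta function. -/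
/-!
For `t > 0` the geometric series gives `1 / (eᵗ + 1) = ∑_{n ≥ 1} (-1)ⁿ⁻¹ e^{-nt}`, so for `Re s > 1`
the Mellin transform of `1 / (eᵗ + 1)` is `Γ(s) η(s)` with `η(s) = ∑_{n ≥ 1} (-1)ⁿ⁻¹ n^{-s}`, and
splitting into even and odd `n` gives `η(s) = (1 - 2^{1-s}) ζ(s)`. Realising `η` as the entire
`L`-function of the mean-zero function `n ↦ (-1)ⁿ⁻¹` on `ZMod 2`, the identity theorem extends the
first identity to `Re s > 0` and the second to `s ≠ 1`.
-/

open Real MeasureTheory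

noncomputable def etaCoeff (j : ZMod 2) : ℂ := -(-1) ^ j.val

lemma etaCoeff_natCast (n : ℕ) : etaCoeff n = -(-1) ^ n := by
  rw [etaCoeff, ZMod.val_natCast, ← neg_one_pow_eq_pow_mod_two]

lemma sum_etaCoeff : ∑ j, etaCoeff j = 0 := by
  show ∑ j : Fin 2, etaCoeff j = 0
  simp [Fin.sum_univ_two, etaCoeff, ZMod.val]

lemma hasSum_neg_one_pow_div_add_one_cpow {s : ℂ} (hs : 1 < s.re) :
    HasSum (fun n : ℕ => (-1) ^ n / ((n : ℂ) + 1) ^ s) ((1 - 2 ^ (1 - s)) * riemannZeta s) := by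
  set z : ℕ → ℂ := fun n => 1 / ((n : ℂ) + 1) ^ s
  have hz : HasSum z (riemannZeta s) := by
    rw [zeta_eq_tsum_one_div_nat_add_one_cpow hs]
    refine Summable.hasSum ?_
    exact (summable_nat_add_iff 1).mpr (Complex.summable_one_div_nat_cpow.mpr hs) |>.congr
      fun n => by push_cast; rfl
  have hz_odd : HasSum (fun k => z (2 * k + 1)) (2 ^ (-s) * riemannZeta s) := by
    refine (hz.mul_left _).congr_fun fun k => ?_
    have : ((2 * k + 1 : ℕ) : ℂ) + 1 = (2 : ℕ) * ((k : ℂ) + 1) := by push_cast; ring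
    simp only [z, this]
    rw [← Nat.cast_add_one, Complex.natCast_mul_natCast_cpow, Complex.cpow_neg]
    push_cast
    field_simp
  have hz_even : HasSum (fun k => z (2 * k)) (riemannZeta s - 2 ^ (-s) * riemannZeta s) := by
    have hsum : Summable fun k => z (2 * k) :=
      hz.summable.comp_injective (i := fun k => 2 * k) fun a b h => by simpa using h
    exact eq_sub_of_add_eq ((hsum.hasSum.even_add_odd hz_odd).unique hz) ▸ hsum.hasSum
  have h2 : (2 : ℂ) ^ (1 - s) = 2 * 2 ^ (-s) := by
    rw [sub_eq_add_neg, Complex.cpow_add _ _ two_ne_zero, Complex.cpow_one]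
  convert HasSum.even_add_odd (f := fun n : ℕ => (-1) ^ n / ((n : ℂ) + 1) ^ s)
    (hz_even.congr_fun fun k => by simp [z, pow_mul])
    (hz_odd.neg.congr_fun fun k => by simp [z, pow_succ, pow_mul, neg_div]) using 1
  rw [h2]; ring

lemma LFunction_etaCoeff_of_one_lt_re {s : ℂ} (hs : 1 < s.re) :
    ZMod.LFunction etaCoeff s = (1 - 2 ^ (1 - s)) * riemannZeta s := by
  rw [ZMod.LFunction_eq_LSeries _ hs, LSeries]
  refine HasSum.tsum_eq <| (hasSum_nat_add_iff' 1).mp ?_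
  simpa [LSeries.term_of_ne_zero, etaCoeff_natCast, pow_succ] using
    hasSum_neg_one_pow_div_add_one_cpow hs

lemma LFunction_etaCoeff {s : ℂ} (hs : s ≠ 1) :
    ZMod.LFunction etaCoeff s = (1 - 2 ^ (1 - s)) * riemannZeta s := by
  refine AnalyticOnNhd.eqOn_of_preconnected_of_eventuallyEq (𝕜 := ℂ) (z₀ := 2)
    (g := fun s => (1 - 2 ^ (1 - s)) * riemannZeta s) ?_ ?_
    (isConnected_compl_singleton_of_one_lt_rank (by simp) 1).isPreconnected (by norm_num) ?_ hs
  · exact (ZMod.differentiable_LFunction_of_sum_zero sum_etaCoeff).differentiableOn.analyticOnNhd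
      isOpen_compl_singleton
  · refine DifferentiableOn.analyticOnNhd (fun t ht => DifferentiableAt.differentiableWithinAt ?_)
      isOpen_compl_singleton
    exact ((differentiableAt_const _).sub ((differentiableAt_const _).sub differentiableAt_id
      |>.const_cpow (.inl two_ne_zero))).mul (differentiableAt_riemannZeta ht)
  · filter_upwards [(isOpen_lt continuous_const Complex.continuous_re).mem_nhds
      (show (1 : ℝ) < (2 : ℂ).re by norm_num)] with z hz
    exact LFunction_etaCoeff_of_one_lt_re hz

lemma hasSum_inv_exp_add_one {t : ℝ} (ht : 0 < t) :
    HasSum (fun n : ℕ => (-1) ^ n * rexp (-(n + 1) * t)) (rexp t + 1)⁻¹ := by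
  have hr : |-rexp (-t)| < 1 := by
    rw [abs_neg, abs_of_pos (exp_pos _)]
    exact exp_lt_one_iff.mpr (neg_lt_zero.mpr ht)
  have hsum : rexp (-t) * (1 - -rexp (-t))⁻¹ = (rexp t + 1)⁻¹ := by
    rw [sub_neg_eq_add, exp_neg]
    field_simp
  refine hsum ▸ ((hasSum_geometric_of_abs_lt_one hr).mul_left (rexp (-t))).congr_fun fun n => ?_
  rw [neg_pow (rexp (-t)), ← exp_nat_mul, mul_left_comm, ← exp_add]
  ring_nf

lemma mellin_inv_exp_add_one_of_one_lt_re {s : ℂ} (hs : 1 < s.re) :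
    mellin (fun t => (((rexp t + 1)⁻¹ : ℝ) : ℂ)) s =
      Complex.Gamma s * ((1 - 2 ^ (1 - s)) * riemannZeta s) := by
  have hmellin := hasSum_mellin (a := fun n : ℕ => (-1 : ℂ) ^ n) (p := fun n => n + 1)
    (fun n => .inr n.cast_add_one_pos) (zero_lt_one.trans hs)
    (fun t ht => (Complex.hasSum_ofReal.mpr (hasSum_inv_exp_add_one ht)).congr_fun fun n => by
      push_cast; rfl) <|
    ((Real.summable_one_div_nat_add_rpow 1 s.re).mpr hs).congr fun n => by
      simp [abs_of_pos (n.cast_add_one_pos (α := ℝ))]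
  refine hmellin.unique <|
    ((hasSum_neg_one_pow_div_add_one_cpow hs).mul_left _).congr_fun fun n => ?_
  push_cast
  ring

lemma differentiableAt_mellin_inv_exp_add_one {s : ℂ} (hs : 0 < s.re) :
    DifferentiableAt ℂ (mellin fun t => (((rexp t + 1)⁻¹ : ℝ) : ℂ)) s := by
  have hcont : Continuous fun t => (((rexp t + 1)⁻¹ : ℝ) : ℂ) :=
    Complex.continuous_ofReal.comp <| (continuous_exp.add continuous_const).inv₀ fun t =>
      (add_pos (exp_pos t) one_pos).ne'
  have hnorm (t : ℝ) : ‖(((rexp t + 1)⁻¹ : ℝ) : ℂ)‖ = (rexp t + 1)⁻¹ := by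
    rw [Complex.norm_real, Real.norm_of_nonneg (by positivity)]
  refine mellin_differentiableAt_of_isBigO_rpow_exp one_pos
    (hcont.continuousOn.locallyIntegrableOn measurableSet_Ioi) ?_ ?_ hs
  · refine Asymptotics.IsBigO.of_bound 1 (.of_forall fun t => ?_)
    rw [hnorm, one_mul, neg_one_mul, Real.norm_of_nonneg (exp_pos _).le, exp_neg]
    gcongr
    linarith
  · refine Asymptotics.IsBigO.of_bound 1 (.of_forall fun t => ?_)
    rw [hnorm, neg_zero, rpow_zero, norm_one, one_mul]
    exact inv_le_one_of_one_le₀ (by linarith [exp_pos t])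

lemma mellin_inv_exp_add_one {s : ℂ} (hs : 0 < s.re) :
    mellin (fun t => (((rexp t + 1)⁻¹ : ℝ) : ℂ)) s =
      Complex.Gamma s * ZMod.LFunction etaCoeff s := by
  have hopen : IsOpen {z : ℂ | 0 < z.re} := isOpen_lt continuous_const Complex.continuous_re
  refine AnalyticOnNhd.eqOn_of_preconnected_of_eventuallyEq (𝕜 := ℂ) (z₀ := 2)
    (g := fun z => Complex.Gamma z * ZMod.LFunction etaCoeff z) ?_ ?_
    (convex_halfSpace_re_gt 0).isPreconnected (by norm_num) ?_ hs
  · exact DifferentiableOn.analyticOnNhd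
      (fun z hz => (differentiableAt_mellin_inv_exp_add_one hz).differentiableWithinAt) hopen
  · refine DifferentiableOn.analyticOnNhd
      (fun z hz => DifferentiableAt.differentiableWithinAt ?_) hopen
    exact (Complex.differentiableAt_Gamma z fun m hm => by
      simp [hm] at hz; linarith [m.cast_nonneg (α := ℝ)]).mul
      (ZMod.differentiable_LFunction_of_sum_zero sum_etaCoeff z)
  · filter_upwards [(isOpen_lt continuous_const Complex.continuous_re).mem_nhds
      (show (1 : ℝ) < (2 : ℂ).re by norm_num)] with z hz
    rw [mellin_inv_exp_add_one_of_one_lt_re hz, LFunction_etaCoeff_of_one_lt_re hz]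

lemma integral_rpow_div_exp_add_one {x : ℝ} (hx : 0 < x) (hx1 : x ≠ 1) :
    ∫ t in Set.Ioi (0 : ℝ), t ^ (x - 1) / (rexp t + 1) =
      Real.Gamma x * (1 - (2 : ℝ) ^ (1 - x)) * (riemannZeta x).re := by
  have hmellin : mellin (fun t => (((rexp t + 1)⁻¹ : ℝ) : ℂ)) x =
      ((∫ t in Set.Ioi (0 : ℝ), t ^ (x - 1) / (rexp t + 1) : ℝ) : ℂ) := by
    refine (setIntegral_congr_fun measurableSet_Ioi fun t (ht : 0 < t) => ?_).trans integral_ofReal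
    simp [Complex.ofReal_cpow ht.le, div_eq_mul_inv]
  have hcomplex : mellin (fun t => (((rexp t + 1)⁻¹ : ℝ) : ℂ)) x =
      ((Real.Gamma x * (1 - (2 : ℝ) ^ (1 - x)) : ℝ) : ℂ) * riemannZeta x := by
    rw [mellin_inv_exp_add_one (by simpa using hx), LFunction_etaCoeff (by exact_mod_cast hx1),
      ← Complex.ofReal_ofNat, ← Complex.ofReal_one, ← Complex.ofReal_sub,
      ← Complex.ofReal_cpow zero_le_two, Complex.Gamma_ofReal]
    push_cast
    ring
  simpa using congrArg Complex.re (hmellin.symm.trans hcomplex)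

/-- For real `x > 0`, `x ≠ 1`: `∫₀^∞ x·t^{x-1}/(eᵗ+1) dt = (1 - 2^{1-x})·ζ(x)·Γ(x+1)`,
where `ζ(x)` is the analytic continuation of the Riemann zeta function (real-valued at
real arguments). -/
theorem integral_eq_eta_zeta (x : ℝ) (hx : 0 < x) (hx1 : x ≠ 1) :
    ∫ t in Set.Ioi (0 : ℝ), x * t ^ (x - 1) / (Real.exp t + 1) =
      (1 - (2 : ℝ) ^ (1 - x)) * (riemannZeta (x : ℂ)).re * Real.Gamma (x + 1) := by
  simp_rw [mul_div_assoc]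
  rw [integral_const_mul, integral_rpow_div_exp_add_one hx hx1, Real.Gamma_add_one hx.ne']
  ring
end

section
/- For every real x > 0, integration by parts gives ∫₀^∞ x·t^{x-1}/(e^t + 1) dt = ∫₀^∞ t^x·e^t/(e^t + 1)² dt. -/
/-!
The derivative of `f t = t ^ x / (eᵗ + 1)` is the difference of the two integrands, each of which
is dominated by a multiple of a Gamma integrand `e^{-t} t^{s-1}`. Since `f` vanishes at `0`
(as `x > 0`) and at `∞`, the fundamental theorem of calculus on `(0, ∞)` gives `∫ f' = 0`.
-/

open Real MeasureTheory Set Filter Topology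

lemma inv_exp_add_one_le_exp_neg (t : ℝ) : (exp t + 1)⁻¹ ≤ exp (-t) := by
  rw [exp_neg]
  exact inv_anti₀ (exp_pos t) (by linarith)

lemma exp_div_exp_add_one_sq_le_exp_neg (t : ℝ) : exp t / (exp t + 1) ^ 2 ≤ exp (-t) := by
  have hsq : exp t * exp t ≤ (exp t + 1) ^ 2 := by nlinarith [exp_pos t]
  rw [div_le_iff₀ (by positivity), exp_neg]
  calc exp t = (exp t)⁻¹ * (exp t * exp t) := by field_simp
    _ ≤ (exp t)⁻¹ * (exp t + 1) ^ 2 := by gcongr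

lemma integrableOn_Ioi_of_le_const_mul_gammaIntegrand {g : ℝ → ℝ} {s C : ℝ} (hs : 0 < s)
    (hg : ContinuousOn g (Ioi 0)) (hle : ∀ t > 0, ‖g t‖ ≤ C * (exp (-t) * t ^ (s - 1))) :
    IntegrableOn g (Ioi 0) :=
  ((GammaIntegral_convergent hs).const_mul C).mono' (hg.aestronglyMeasurable measurableSet_Ioi)
    ((ae_restrict_mem measurableSet_Ioi).mono hle)

lemma tendsto_rpow_div_exp_add_one_atTop (x : ℝ) :
    Tendsto (fun t : ℝ => t ^ x / (exp t + 1)) atTop (𝓝 0) := by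
  have hdecay : Tendsto (fun t : ℝ => t ^ x * exp (-1 * t)) atTop (𝓝 0) :=
    tendsto_rpow_mul_exp_neg_mul_atTop_nhds_zero x 1 one_pos
  refine squeeze_zero' ?_ ?_ hdecay <;> filter_upwards [eventually_gt_atTop 0] with t ht
  · have := rpow_nonneg ht.le x
    positivity
  · rw [neg_one_mul, div_eq_mul_inv]
    exact mul_le_mul_of_nonneg_left (inv_exp_add_one_le_exp_neg t) (rpow_nonneg ht.le x)

variable {x : ℝ}

lemma integrableOn_mul_rpow_sub_one_div_exp_add_one (hx : 0 < x) :
    IntegrableOn (fun t : ℝ => x * t ^ (x - 1) / (exp t + 1)) (Ioi 0) := by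
  refine integrableOn_Ioi_of_le_const_mul_gammaIntegrand (C := x) hx
    (fun t ht => ContinuousAt.continuousWithinAt
      (by fun_prop (disch := first | positivity | exact Or.inl (ne_of_gt ht)))) fun t ht => ?_
  have hpow : 0 ≤ t ^ (x - 1) := rpow_nonneg ht.le _
  rw [norm_of_nonneg (by positivity), mul_div_assoc, div_eq_mul_inv]
  calc x * (t ^ (x - 1) * (exp t + 1)⁻¹) ≤ x * (t ^ (x - 1) * exp (-t)) := by
        gcongr; exact inv_exp_add_one_le_exp_neg t
    _ = x * (exp (-t) * t ^ (x - 1)) := by ring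

lemma integrableOn_rpow_mul_exp_div_exp_add_one_sq (hx : 0 < x) :
    IntegrableOn (fun t : ℝ => t ^ x * exp t / (exp t + 1) ^ 2) (Ioi 0) := by
  refine integrableOn_Ioi_of_le_const_mul_gammaIntegrand (s := x + 1) (C := 1) (by linarith)
    (fun t ht => ContinuousAt.continuousWithinAt
      (by fun_prop (disch := first | positivity | exact Or.inl (ne_of_gt ht)))) fun t ht => ?_
  have hpow : 0 ≤ t ^ x := rpow_nonneg ht.le _
  rw [norm_of_nonneg (by positivity), mul_div_assoc, add_sub_cancel_right, one_mul, mul_comm _ (t ^ x)]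
  gcongr
  exact exp_div_exp_add_one_sq_le_exp_neg t

lemma hasDerivAt_rpow_div_exp_add_one {t : ℝ} (ht : t ≠ 0) :
    HasDerivAt (fun t : ℝ => t ^ x / (exp t + 1))
      (x * t ^ (x - 1) / (exp t + 1) - t ^ x * exp t / (exp t + 1) ^ 2) t := by
  have hpos : exp t + 1 ≠ 0 := by positivity
  have hquot := (hasDerivAt_rpow_const (p := x) (Or.inl ht)).div ((hasDerivAt_exp t).add_const 1) hpos
  rwa [sub_div, pow_two, mul_div_mul_right _ _ hpos, ← pow_two] at hquot

/-- Integration by parts: for `x > 0`,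
`∫₀^∞ x·t^{x-1}/(eᵗ+1) dt = ∫₀^∞ t^x·eᵗ/(eᵗ+1)² dt`. -/
theorem integral_by_parts_eta (x : ℝ) (hx : 0 < x) :
    ∫ t in Set.Ioi (0 : ℝ), x * t ^ (x - 1) / (Real.exp t + 1) =
      ∫ t in Set.Ioi (0 : ℝ), t ^ x * Real.exp t / (Real.exp t + 1) ^ 2 := by
  have hcont : ContinuousWithinAt (fun t : ℝ => t ^ x / (exp t + 1)) (Ici 0) 0 :=
    ((continuousAt_rpow_const 0 x (Or.inr hx.le)).div (by fun_prop)
      (by positivity)).continuousWithinAt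
  have hftc := integral_Ioi_of_hasDerivAt_of_tendsto hcont
    (fun t ht => hasDerivAt_rpow_div_exp_add_one (ne_of_gt ht))
    ((integrableOn_mul_rpow_sub_one_div_exp_add_one hx).sub
      (integrableOn_rpow_mul_exp_div_exp_add_one_sq hx))
    (tendsto_rpow_div_exp_add_one_atTop x)
  rw [integral_sub (integrableOn_mul_rpow_sub_one_div_exp_add_one hx)
    (integrableOn_rpow_mul_exp_div_exp_add_one_sq hx), zero_rpow hx.ne', zero_div, sub_zero] at hftc
  exact sub_eq_zero.mp hftc
end
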